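/- arXiv:0801.0658 — 4 statements merged into one kernel-verified Lean document; each statement's English description precedes it below -/
import Mathlib

section
/- Let n ≥ 6, t ≥ 0 with n − 6 − t ≥ 0, and let π = (d_1, d_2, 3^4, 2^t, 1^{n−6−t}) be a graphic sequence of n terms with d_1 ≥ d_2 ≥ 3. If π is potentially K_{3,3}-graphic, then d_1 + d_2 ≤ n + t + 2. -/
/-- `π` is the degree sequence (as a multiset) of the simple graph `G`. -/
def IsDegSeqOf {V : Type} [Fintype V] (G : SimpleGraph V) (π : List ℕ) : Prop :=
  Multiset.map (fun v => (G.neighborSet v).ncard) Finset.univ.val = (π : Multiset ℕ)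

/-- `π` is graphic: it is realized by some simple graph on `π.length` vertices. -/
def IsGraphic (π : List ℕ) : Prop :=
  ∃ G : SimpleGraph (Fin π.length), IsDegSeqOf G π

/-- `π` is potentially `H`-graphic: some realization of `π` contains a copy of `H`
as a subgraph (an injective graph homomorphism from `H`). -/
def PotentiallyGraphic {W : Type} (H : SimpleGraph W) (π : List ℕ) : Prop :=
  ∃ G : SimpleGraph (Fin π.length), IsDegSeqOf G π ∧ ∃ f : H →g G, Function.Injective f

/-- The complete bipartite graph `K_{3,3}`. -/
def K33 : SimpleGraph (Fin 3 ⊕ Fin 3) := completeBipartiteGraph (Fin 3) (Fin 3)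

/-- `K_6 − C_6`, the complement of the 6-cycle. -/
def K6mC6 : SimpleGraph (Fin 6) := (SimpleGraph.cycleGraph 6)ᶜ

/-!
Let `c` be a copy of `K_{3,3}` in a realization `G` of `π`. Its six vertices have degree at least 3
in `G`, and `π` has exactly six such terms, so they are precisely the vertices of degree `≥ 3`.
Only two of them can have degree `≥ 4`, and a vertex of degree 3 is adjacent to nothing but its
three `K_{3,3}`-neighbours. Hence each vertex of the copy has at most `min (deg v) 4` neighbours
inside the copy, at most 20 in total, and the remaining `d₁ + d₂ + 12 - 20` edge ends leave the
copy. They land on vertices of degree at most 2, whose degrees add up to `2t + (n - 6 - t)`.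
-/

open Finset SimpleGraph

namespace IsDegSeqOf

variable {V : Type} [Fintype V] {G : SimpleGraph V} [DecidableRel G.Adj] {π : List ℕ}

theorem map_degree (h : IsDegSeqOf G π) :
    univ.val.map (fun v => G.degree v) = (π : Multiset ℕ) := by
  rw [← h]
  exact Multiset.map_congr rfl fun v _ => by
    rw [Set.ncard_eq_toFinset_card', Set.toFinset_card, card_neighborSet_eq_degree]

theorem sum_filter_degree (h : IsDegSeqOf G π) (p : ℕ → Prop) [DecidablePred p] (g : ℕ → ℕ) :
    ∑ v with p (G.degree v), g (G.degree v) = ((π.filter p).map g).sum := by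
  calc ∑ v with p (G.degree v), g (G.degree v)
      = (((univ.val.map fun v => G.degree v).filter p).map g).sum := by
        rw [Multiset.filter_map, Multiset.map_map]; rfl
    _ = ((π.filter p).map g).sum := by
        rw [h.map_degree, Multiset.filter_coe, Multiset.map_coe, Multiset.sum_coe]

theorem sum_degree_filter (h : IsDegSeqOf G π) (p : ℕ → Prop) [DecidablePred p] :
    ∑ v with p (G.degree v), G.degree v = (π.filter p).sum := by
  simpa using h.sum_filter_degree p id

theorem card_filter_degree (h : IsDegSeqOf G π) (p : ℕ → Prop) [DecidablePred p] :
    #{v | p (G.degree v)} = π.countP p := by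
  rw [← Multiset.coe_countP, ← h.map_degree, Multiset.countP_map]
  rfl

end IsDegSeqOf

namespace SimpleGraph

variable {V W : Type*} [Fintype V] [Fintype W] {H : SimpleGraph W} {G : SimpleGraph V}
  [DecidableRel H.Adj] [DecidableRel G.Adj]

theorem Copy.adj_of_degree_le (c : Copy H G) {w m : W} (hm : G.degree (c m) ≤ H.degree m)
    (hadj : G.Adj (c w) (c m)) : H.Adj w m := by
  have hbij : Function.Bijective (c.mapNeighborSet m) := by
    rw [Fintype.bijective_iff_injective_and_card]
    refine ⟨(c.mapNeighborSet m).injective, ?_⟩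
    simp only [card_neighborSet_eq_degree]
    exact le_antisymm (c.degree_le m) hm
  obtain ⟨⟨v, hv⟩, hcv⟩ := hbij.2 ⟨c w, hadj.symm⟩
  obtain rfl : v = w := c.injective (congrArg Subtype.val hcv)
  exact hv.symm

theorem Copy.image_eq_filter_degree [DecidableEq V] (c : Copy H G) {k : ℕ}
    (hH : H.IsRegularOfDegree k) (hcard : #{v | k ≤ G.degree v} ≤ Fintype.card W) :
    univ.image c = ({v | k ≤ G.degree v} : Finset V) := by
  have hc : Function.Injective c := c.injective
  refine eq_of_subset_of_card_le (fun v hv => ?_) ?_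
  · obtain ⟨w, -, rfl⟩ := mem_image.1 hv
    simpa [hH.degree_eq w] using c.degree_le w
  · rwa [card_image_of_injective _ hc, card_univ]

variable [DecidableEq V]

theorem sum_degree_le_sum_card_inter_add_sum_degree_compl (S : Finset V) :
    ∑ v ∈ S, G.degree v ≤ ∑ v ∈ S, #(G.neighborFinset v ∩ S) + ∑ v ∈ Sᶜ, G.degree v := by
  have hsplit : ∀ v, G.degree v = #(G.neighborFinset v ∩ S) + #(Sᶜ.bipartiteAbove G.Adj v) := by
    intro v
    rw [← card_neighborFinset_eq_degree, ← card_inter_add_card_sdiff _ S]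
    congr 2
    ext u
    simp [bipartiteAbove, and_comm]
  have hout : ∀ u ∈ Sᶜ, #(S.bipartiteBelow G.Adj u) ≤ G.degree u := fun u _ => by
    rw [← card_neighborFinset_eq_degree]
    refine card_le_card fun v hv => ?_
    simp only [bipartiteBelow, mem_filter, mem_neighborFinset] at hv ⊢
    exact hv.2.symm
  calc ∑ v ∈ S, G.degree v
      = ∑ v ∈ S, #(G.neighborFinset v ∩ S) + ∑ v ∈ S, #(Sᶜ.bipartiteAbove G.Adj v) := by
        rw [← sum_add_distrib]; exact sum_congr rfl fun v _ => hsplit v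
    _ = ∑ v ∈ S, #(G.neighborFinset v ∩ S) + ∑ u ∈ Sᶜ, #(S.bipartiteBelow G.Adj u) := by
        rw [sum_card_bipartiteAbove_eq_sum_card_bipartiteBelow]
    _ ≤ _ := by gcongr with u hu; exact hout u hu

theorem card_neighborFinset_inter_le_card_sub_two {S : Finset V} {v u : V} (hv : v ∈ S)
    (hu : u ∈ S) (huv : u ≠ v) (hnadj : ¬ G.Adj v u) :
    #(G.neighborFinset v ∩ S) ≤ #S - 2 := by
  have hsub : G.neighborFinset v ∩ S ⊆ S \ {v, u} := fun x hx => by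
    simp only [mem_inter, mem_neighborFinset] at hx
    simp only [mem_sdiff, mem_insert, mem_singleton]
    exact ⟨hx.2, by rintro (rfl | rfl) <;> simp_all⟩
  calc #(G.neighborFinset v ∩ S) ≤ #(S \ {v, u}) := card_le_card hsub
    _ = #S - 2 := by
      rw [card_sdiff_of_subset (by simp [insert_subset_iff, hv, hu]), card_pair huv.symm]

end SimpleGraph

instance K33.decidableAdj : DecidableRel K33.Adj := fun v w =>
  inferInstanceAs (Decidable (v.isLeft ∧ w.isRight ∨ v.isRight ∧ w.isLeft))

theorem K33_isRegularOfDegree : K33.IsRegularOfDegree 3 := by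
  intro w; revert w; decide

theorem K33_exists_two_nonadj (w : Fin 3 ⊕ Fin 3) :
    ∃ m₁ m₂, m₁ ≠ m₂ ∧ m₁ ≠ w ∧ m₂ ≠ w ∧ ¬ K33.Adj w m₁ ∧ ¬ K33.Adj w m₂ := by
  revert w; decide

theorem K33_card_neighborFinset_inter_image_le {V : Type} [Fintype V] [DecidableEq V]
    {G : SimpleGraph V} [DecidableRel G.Adj] (c : Copy K33 G)
    (hbig : #{v | 4 ≤ G.degree v} ≤ 2) (w : Fin 3 ⊕ Fin 3) :
    #(G.neighborFinset (c w) ∩ univ.image c) ≤ min (G.degree (c w)) 4 := by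
  have hc : Function.Injective c := c.injective
  refine le_min (card_le_card inter_subset_left) ?_
  by_cases hw : G.degree (c w) ≤ 4
  · exact (card_le_card inter_subset_left).trans hw
  obtain ⟨m₁, m₂, h12, h1w, h2w, hn1, hn2⟩ := K33_exists_two_nonadj w
  -- Only two vertices have degree `≥ 4`, so a part-mate of `w` has degree 3.
  obtain ⟨m, hmw, hnm, hm⟩ : ∃ m, m ≠ w ∧ ¬ K33.Adj w m ∧ G.degree (c m) ≤ 3 := by
    by_contra! hcon
    have hsub : ({c w, c m₁, c m₂} : Finset V) ⊆ ({v | 4 ≤ G.degree v} : Finset V) := by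
      simp only [insert_subset_iff, singleton_subset_iff, mem_filter_univ]
      exact ⟨by omega, hcon m₁ h1w hn1, hcon m₂ h2w hn2⟩
    have hcard : #({c w, c m₁, c m₂} : Finset V) = 3 :=
      card_eq_three.mpr ⟨_, _, _, hc.ne h1w.symm, hc.ne h2w.symm, hc.ne h12, rfl⟩
    have := card_le_card hsub
    omega
  have hnadj : ¬ G.Adj (c w) (c m) := fun hadj =>
    hnm (c.adj_of_degree_le (by rwa [K33_isRegularOfDegree.degree_eq]) hadj)
  calc #(G.neighborFinset (c w) ∩ univ.image c) ≤ #(univ.image c) - 2 :=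
        card_neighborFinset_inter_le_card_sub_two (mem_image_of_mem _ (mem_univ w))
          (mem_image_of_mem _ (mem_univ m)) (hc.ne hmw) hnadj
    _ = 4 := by rw [card_image_of_injective _ hc]; rfl

section SequenceShape

variable {d₁ d₂ : ℕ} (t k : ℕ)

theorem filter_three_le_shape (h₁ : 3 ≤ d₁) (h₂ : 3 ≤ d₂) :
    ([d₁, d₂] ++ List.replicate 4 3 ++ List.replicate t 2 ++ List.replicate k 1).filter (3 ≤ ·)
      = [d₁, d₂, 3, 3, 3, 3] := by
  simp [h₁, h₂]

theorem filter_not_three_le_shape (h₁ : 3 ≤ d₁) (h₂ : 3 ≤ d₂) :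
    ([d₁, d₂] ++ List.replicate 4 3 ++ List.replicate t 2 ++ List.replicate k 1).filter
      (¬ 3 ≤ ·) = List.replicate t 2 ++ List.replicate k 1 := by
  simp [h₁, h₂, List.filter_append]

theorem countP_four_le_shape :
    ([d₁, d₂] ++ List.replicate 4 3 ++ List.replicate t 2 ++ List.replicate k 1).countP (4 ≤ ·)
      ≤ 2 := by
  have : [d₁, d₂].countP (4 ≤ ·) ≤ 2 := List.countP_le_length
  simp only [List.countP_append, List.countP_replicate]
  simpa using this

end SequenceShape

theorem K33_necessary_condition_6_general
    (n t d₁ d₂ : ℕ) (ht : 6 + t ≤ n) (h12 : d₂ ≤ d₁) (h2 : 3 ≤ d₂)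
    (π : List ℕ)
    (hπ : π = [d₁, d₂] ++ List.replicate 4 3 ++ List.replicate t 2 ++
          List.replicate (n - 6 - t) 1)
    (hpot : PotentiallyGraphic K33 π) :
    d₁ + d₂ ≤ n + t + 2 := by
  classical
  obtain ⟨G, hdeg, f, hf⟩ := hpot
  let c : Copy K33 G := f.toCopy hf
  have hc : Function.Injective c := hf
  have hhigh := filter_three_le_shape t (n - 6 - t) (h2.trans h12) h2
  have hlow := filter_not_three_le_shape t (n - 6 - t) (h2.trans h12) h2
  rw [← hπ] at hhigh hlow
  have hbig : #{v | 4 ≤ G.degree v} ≤ 2 := by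
    rw [hdeg.card_filter_degree, hπ]
    exact countP_four_le_shape t (n - 6 - t)
  set S : Finset (Fin π.length) := {v | 3 ≤ G.degree v} with hSdef
  have hS : univ.image c = S := c.image_eq_filter_degree K33_isRegularOfDegree (by
    rw [hdeg.card_filter_degree, List.countP_eq_length_filter, hhigh]; rfl)
  have hinside : ∑ v ∈ S, #(G.neighborFinset v ∩ S) ≤ ∑ v ∈ S, min (G.degree v) 4 := by
    rw [← hS, sum_image hc.injOn, sum_image hc.injOn]
    exact sum_le_sum fun w _ => K33_card_neighborFinset_inter_image_le c hbig w
  have hout : ∑ v ∈ Sᶜ, G.degree v = (π.filter (¬ 3 ≤ ·)).sum := by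
    rw [hSdef, compl_filter]; exact hdeg.sum_degree_filter (¬ 3 ≤ ·)
  have hcount := G.sum_degree_le_sum_card_inter_add_sum_degree_compl S
  rw [hout, hlow, hSdef, hdeg.sum_degree_filter, hhigh] at hcount
  rw [hSdef, hdeg.sum_filter_degree (3 ≤ ·) (min · 4), hhigh] at hinside
  simp only [List.map_cons, List.map_nil, List.sum_cons, List.sum_nil, List.sum_append,
    List.sum_replicate, smul_eq_mul] at hcount hinside
  omega

/-- Necessity of condition (6) in Theorem 3.1: if the graphic sequence
`(d₁, d₂, 3⁴, 2ᵗ, 1^{n−6−t})` is potentially `K_{3,3}`-graphic, then `d₁ + d₂ ≤ n + t + 2`. -/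
theorem K33_necessary_condition_6
    (n t d₁ d₂ : ℕ) (hn : 6 ≤ n) (ht : 6 + t ≤ n) (h12 : d₂ ≤ d₁) (h2 : 3 ≤ d₂)
    (π : List ℕ)
    (hπ : π = [d₁, d₂] ++ List.replicate 4 3 ++ List.replicate t 2 ++
          List.replicate (n - 6 - t) 1)
    (hgraphic : IsGraphic π) (hpot : PotentiallyGraphic K33 π) :
    d₁ + d₂ ≤ n + t + 2 :=
  K33_necessary_condition_6_general n t d₁ d₂ ht h12 h2 π hπ hpot
end

section
/- Let n, i, k, t be integers with 4 ≤ t ≤ k − i − 1, i + t + 1 ≤ k ≤ n − i, and 1 ≤ i ≤ ⌊(n−t−1)/2⌋. Then the sequence π = (n−i, k, t, 3^t, 2^{k−i−t−1}, 1^{n−2−k+i}) of n terms is not potentially (K_6 − C_6)-graphic. -/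
open Finset SimpleGraph

theorem Finset.exists_mem_map_erase_val_eq_of_map_val_eq_cons {α β : Type*} [DecidableEq α]
    {s : Finset α} {f : α → β} {b : β} {m : Multiset β} (h : s.val.map f = b ::ₘ m) :
    ∃ a ∈ s, f a = b ∧ (s.erase a).val.map f = m := by
  obtain ⟨a, ha, rfl⟩ := Multiset.mem_map.1 (h ▸ Multiset.mem_cons_self b m)
  refine ⟨a, ha, rfl, ?_⟩
  rw [← Multiset.cons_erase ha, Multiset.map_cons] at h
  exact (Multiset.cons_inj_right _).1 h

theorem isDegSeqOf_iff_map_degree {V : Type} [Fintype V] {G : SimpleGraph V} [DecidableRel G.Adj]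
    {π : List ℕ} : IsDegSeqOf G π ↔ univ.val.map (fun v => G.degree v) = (π : Multiset ℕ) := by
  refine Eq.congr_left (Multiset.map_congr rfl fun v _ => ?_)
  rw [Set.ncard_eq_toFinset_card']
  rfl

theorem IsDegSeqOf.exists_of_cons_cons {V : Type} [Fintype V] [DecidableEq V] {G : SimpleGraph V}
    [DecidableRel G.Adj] {a b : ℕ} {l : List ℕ} (h : IsDegSeqOf G (a :: b :: l)) :
    ∃ u₁ u₂, u₁ ≠ u₂ ∧ G.degree u₁ = a ∧ G.degree u₂ = b ∧
      ({u₁, u₂}ᶜ : Finset V).val.map (fun v => G.degree v) = (l : Multiset ℕ) := by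
  rw [isDegSeqOf_iff_map_degree, ← Multiset.cons_coe, ← Multiset.cons_coe] at h
  obtain ⟨u₁, -, hu₁, h⟩ := exists_mem_map_erase_val_eq_of_map_val_eq_cons h
  obtain ⟨u₂, hu₂, hu₂', h⟩ := exists_mem_map_erase_val_eq_of_map_val_eq_cons h
  refine ⟨u₁, u₂, (ne_of_mem_erase hu₂).symm, hu₁, hu₂', ?_⟩
  convert h using 3
  ext v
  simp [and_comm]

namespace SimpleGraph

variable {V : Type*} [Fintype V] {G : SimpleGraph V} [DecidableRel G.Adj]

theorem sum_card_filter_adj_eq_sum_degree (P : Finset V) :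
    ∑ v, #{u ∈ P | G.Adj v u} = ∑ u ∈ P, G.degree u := by
  have h := sum_card_bipartiteAbove_eq_sum_card_bipartiteBelow (s := P) (t := univ) (r := G.Adj)
  simp only [bipartiteAbove, bipartiteBelow, ← neighborFinset_eq_filter,
    card_neighborFinset_eq_degree] at h
  simp only [h, G.adj_comm]

theorem adj_of_two_add_sum_min_two_degree_le [DecidableEq V] {u₁ u₂ : V} (h₁₂ : u₁ ≠ u₂)
    (hsum : 2 + ∑ v ∈ ({u₁, u₂} : Finset V)ᶜ, min 2 (G.degree v) ≤ G.degree u₁ + G.degree u₂)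
    {v : V} (hv : v ∈ ({u₁, u₂} : Finset V)ᶜ) (h2 : 2 ≤ G.degree v) :
    G.Adj v u₁ ∧ G.Adj v u₂ := by
  set P : Finset V := {u₁, u₂}
  have hP : #P = 2 := card_pair h₁₂
  set c : V → ℕ := fun w => #{u ∈ P | G.Adj w u}
  have hc_le : ∀ w, c w ≤ min 2 (G.degree w) := fun w =>
    le_min ((card_filter_le _ _).trans card_le_two)
      (card_neighborFinset_eq_degree G w ▸ card_le_card fun u hu =>
        (G.mem_neighborFinset w u).2 (mem_filter.1 hu).2)
  have hc_self : ∀ u ∈ P, c u ≤ 1 := fun u hu => by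
    have hsub : {w ∈ P | G.Adj u w} ⊆ P.erase u := fun w hw =>
      mem_erase.2 ⟨fun h => G.irrefl (h ▸ (mem_filter.1 hw).2), (mem_filter.1 hw).1⟩
    simpa only [card_erase_of_mem hu, hP] using card_le_card hsub
  have hcount : ∑ w ∈ P, c w + ∑ w ∈ Pᶜ, c w = G.degree u₁ + G.degree u₂ := by
    rw [sum_add_sum_compl, sum_card_filter_adj_eq_sum_degree, sum_pair h₁₂]
  -- `c u₁ + c u₂ ≤ 2` uses up all the slack in `hsum`, so `c` attains its bound on `Pᶜ`.
  have hsum_eq : ∑ w ∈ Pᶜ, c w = ∑ w ∈ Pᶜ, min 2 (G.degree w) := by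
    refine le_antisymm (sum_le_sum fun w _ => hc_le w) ?_
    have := hc_self u₁ (mem_insert_self _ _)
    have := hc_self u₂ (mem_insert_of_mem (mem_singleton_self _))
    rw [sum_pair h₁₂] at hcount
    omega
  have hcv : c v = #P := by
    rw [(sum_eq_sum_iff_of_le fun w _ => hc_le w).1 hsum_eq v hv, min_eq_left h2, hP]
  have hfilter := eq_of_subset_of_card_le (filter_subset _ P) hcv.ge
  simpa [P, filter_eq_self] using hfilter

theorem Copy.exists_adj_apply_eq_of_degree_le {W : Type*} {H : SimpleGraph W} {V : Type*}
    {G : SimpleGraph V} (f : Copy H G) {w : W} [Fintype (H.neighborSet w)]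
    [Fintype (G.neighborSet (f w))] (hdeg : G.degree (f w) ≤ H.degree w) {z : V}
    (hz : G.Adj (f w) z) : ∃ x, H.Adj w x ∧ f x = z := by
  have hbij := (Fintype.bijective_iff_injective_and_card (f.mapNeighborSet w)).2
    ⟨(f.mapNeighborSet w).injective, by
      simpa only [card_neighborSet_eq_degree] using le_antisymm (f.degree_le w) hdeg⟩
  obtain ⟨⟨x, hx⟩, hxz⟩ := hbij.2 ⟨z, hz⟩
  exact ⟨x, hx, congrArg Subtype.val hxz⟩

end SimpleGraph

instance : DecidableRel K6mC6.Adj :=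
  inferInstanceAs (DecidableRel (SimpleGraph.cycleGraph 6)ᶜ.Adj)

theorem K6mC6_degree (w : Fin 6) : K6mC6.degree w = 3 := by
  revert w
  decide

theorem K6mC6_card_common_adj_le_two {x y : Fin 6} (hxy : x ≠ y) :
    #{w | K6mC6.Adj w x ∧ K6mC6.Adj w y} ≤ 2 := by
  revert x y
  decide

theorem K6mC6_free_of_forall_degree_eq_three_adj {V : Type*} [Fintype V] [DecidableEq V]
    {G : SimpleGraph V} [DecidableRel G.Adj] {u₁ u₂ : V} (h₁₂ : u₁ ≠ u₂) (R : Finset V)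
    (hR : #Rᶜ ≤ 3) (hle : ∀ v ∈ R, G.degree v ≤ 3)
    (hadj : ∀ v ∈ R, G.degree v = 3 → G.Adj v u₁ ∧ G.Adj v u₂) :
    K6mC6.Free G := by
  rintro ⟨f⟩
  set T : Finset (Fin 6) := {w | f w ∈ R}
  have hT : 3 ≤ #T := by
    have hTc : #{w | f w ∉ R} ≤ #Rᶜ :=
      card_le_card_of_injOn f (fun w hw => mem_compl.2 (mem_filter.1 hw).2) f.injective.injOn
    have := card_filter_add_card_filter_not (s := univ) (fun w => f w ∈ R)
    change #T + #{w | f w ∉ R} = #(univ : Finset (Fin 6)) at this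
    rw [card_univ, Fintype.card_fin] at this
    omega
  have hdeg : ∀ w ∈ T, G.degree (f w) = 3 := fun w hw =>
    le_antisymm (hle _ (mem_filter.1 hw).2) (K6mC6_degree w ▸ f.degree_le w)
  have hpre : ∀ w ∈ T, ∀ z, G.Adj (f w) z → ∃ x, K6mC6.Adj w x ∧ f x = z := fun w hw _ hz =>
    f.exists_adj_apply_eq_of_degree_le ((hdeg w hw).trans (K6mC6_degree w).symm).le hz
  have hadj' : ∀ w ∈ T, G.Adj (f w) u₁ ∧ G.Adj (f w) u₂ := fun w hw =>
    hadj _ (mem_filter.1 hw).2 (hdeg w hw)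
  obtain ⟨w₀, hw₀⟩ : T.Nonempty := card_pos.1 (by omega)
  obtain ⟨x, -, rfl⟩ := hpre w₀ hw₀ _ (hadj' w₀ hw₀).1
  obtain ⟨y, -, rfl⟩ := hpre w₀ hw₀ _ (hadj' w₀ hw₀).2
  have hsub : T ⊆ ({w | K6mC6.Adj w x ∧ K6mC6.Adj w y} : Finset _) := fun w hw => by
    obtain ⟨x', hx', hx'x⟩ := hpre w hw _ (hadj' w hw).1
    obtain ⟨y', hy', hy'y⟩ := hpre w hw _ (hadj' w hw).2
    rw [f.injective hx'x] at hx'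
    rw [f.injective hy'y] at hy'
    exact mem_filter.2 ⟨mem_univ _, hx', hy'⟩
  have := (card_le_card hsub).trans (K6mC6_card_common_adj_le_two (ne_of_apply_ne f h₁₂))
  omega

theorem K6mC6_necessary_condition_8_general
    (n i k t : ℕ) (ht1 : 4 ≤ t) (hk1 : i + t + 1 ≤ k)
    (hk2 : k ≤ n - i) (hi1 : 1 ≤ i) :
    ¬ PotentiallyGraphic K6mC6
      ([n - i, k, t] ++ List.replicate t 3 ++ List.replicate (k - i - t - 1) 2 ++
        List.replicate (n + i - k - 2) 1) := by
  rintro ⟨G, hG, f, hf⟩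
  classical
  obtain ⟨u₁, u₂, h₁₂, hd₁, hd₂, hR⟩ := IsDegSeqOf.exists_of_cons_cons (l := t ::
    (List.replicate t 3 ++ List.replicate (k - i - t - 1) 2 ++ List.replicate (n + i - k - 2) 1)) hG
  rw [← Multiset.cons_coe] at hR
  obtain ⟨u₃, -, -, hrest⟩ := exists_mem_map_erase_val_eq_of_map_val_eq_cons hR
  have hle : ∀ v ∈ ({u₁, u₂}ᶜ : Finset _).erase u₃, G.degree v ≤ 3 := fun v hv => by
    have hmem := Multiset.mem_map_of_mem (fun v => G.degree v) (mem_def.1 hv)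
    simp only [hrest, Multiset.mem_coe, List.mem_append, List.mem_replicate] at hmem
    omega
  have hsum : ∑ v ∈ ({u₁, u₂} : Finset _)ᶜ, min 2 (G.degree v) =
      min 2 t + (2 * t + 2 * (k - i - t - 1) + (n + i - k - 2)) := by
    rw [sum_eq_multiset_sum, show (fun v => min 2 (G.degree v)) = min 2 ∘ fun v => G.degree v
      from rfl, ← Multiset.map_map, hR]
    simp [mul_comm, add_assoc]
  have hcompl : #(({u₁, u₂}ᶜ : Finset _).erase u₃)ᶜ ≤ 3 := by
    rw [compl_erase, compl_compl]
    exact (card_insert_le _ _).trans (by rw [card_pair h₁₂])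
  exact K6mC6_free_of_forall_degree_eq_three_adj h₁₂ _ hcompl hle (fun v hv hv3 =>
    adj_of_two_add_sum_min_two_degree_le h₁₂ (by omega) (mem_of_mem_erase hv) (by omega))
    ⟨⟨f, hf⟩⟩

/-- Necessity of condition (8) in Theorem 3.2: the sequence
`(n−i, k, t, 3ᵗ, 2^{k−i−t−1}, 1^{n−2−k+i})` is not potentially `K₆ − C₆`-graphic. -/
theorem K6mC6_necessary_condition_8
    (n i k t : ℕ) (ht1 : 4 ≤ t) (ht2 : t ≤ k - i - 1) (hk1 : i + t + 1 ≤ k)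
    (hk2 : k ≤ n - i) (hi1 : 1 ≤ i) (hi2 : i ≤ (n - t - 1) / 2) :
    ¬ PotentiallyGraphic K6mC6
      ([n - i, k, t] ++ List.replicate t 3 ++ List.replicate (k - i - t - 1) 2 ++
        List.replicate (n + i - k - 2) 1) :=
  K6mC6_necessary_condition_8_general n i k t ht1 hk1 hk2 hi1
end

section
/- Let n ≥ 6, k ≥ 0, t ≥ 0 with n − 3 − k − t ≥ 0, and let π = (d_1, d_2, d_3, 3^k, 2^t, 1^{n−3−k−t}) be a graphic sequence of n terms with d_1 ≥ d_2 ≥ d_3 ≥ 3. If π is potentially (K_6 − C_6)-graphic, then d_1 + d_2 + d_3 ≤ n + 2k + t + 1. -/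
open Finset SimpleGraph

theorem Multiset.exists_eq_add_of_map_eq_add {α β : Type*} (f : α → β) {s : Multiset α}
    {a b : Multiset β} (h : s.map f = a + b) :
    ∃ s₁ s₂ : Multiset α, s = s₁ + s₂ ∧ s₁.map f = a ∧ s₂.map f = b := by
  induction a using Multiset.induction_on generalizing s with
  | empty => exact ⟨0, s, by simp, by simp, by simpa using h⟩
  | cons x a ih =>
    have hx : x ∈ s.map f := by simp [h]
    obtain ⟨y, hy, rfl⟩ := Multiset.mem_map.mp hx
    obtain ⟨s', rfl⟩ := Multiset.exists_cons_of_mem hy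
    rw [Multiset.map_cons, Multiset.cons_add, Multiset.cons_inj_right] at h
    obtain ⟨s₁, s₂, rfl, rfl, rfl⟩ := ih h
    exact ⟨y ::ₘ s₁, s₂, by rw [Multiset.cons_add], by simp, rfl⟩

theorem Finset.exists_map_val_eq_of_map_univ_val_eq_add {α β : Type*} [Fintype α]
    [DecidableEq α] (f : α → β) {a b : Multiset β} (h : univ.val.map f = a + b) :
    ∃ T : Finset α, T.val.map f = a ∧ Tᶜ.val.map f = b := by
  obtain ⟨s₁, s₂, hs, rfl, rfl⟩ := Multiset.exists_eq_add_of_map_eq_add f h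
  have hnodup : s₁.Nodup := Multiset.nodup_of_le (hs ▸ Multiset.le_add_right s₁ s₂) univ.nodup
  refine ⟨⟨s₁, hnodup⟩, rfl, ?_⟩
  rw [compl_eq_univ_sdiff, sdiff_val]
  simp [hs]

theorem ncard_neighborSet_eq_degree {V : Type*} [Fintype V] (G : SimpleGraph V)
    [DecidableRel G.Adj] (v : V) : (G.neighborSet v).ncard = G.degree v := by
  rw [Set.ncard_eq_toFinset_card']
  rfl

theorem isDegSeqOf_iff {V : Type} [Fintype V] (G : SimpleGraph V) [DecidableRel G.Adj]
    (π : List ℕ) : IsDegSeqOf G π ↔ univ.val.map (fun v => G.degree v) = (π : Multiset ℕ) := by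
  simp only [IsDegSeqOf, ncard_neighborSet_eq_degree]

namespace SimpleGraph

variable {V : Type*} (G : SimpleGraph V)

theorem exists_adj_map_notMem {W : Type*} [Fintype W] {H : SimpleGraph W} {n : ℕ}
    (hH : H.IndepSetFree n) (f : H →g G) (hf : Function.Injective f) (T : Finset V)
    (hT : #T + n ≤ Fintype.card W) : ∃ u v, H.Adj u v ∧ f u ∉ T ∧ f v ∉ T := by
  classical
  have hpreimage : #{u | f u ∈ T} ≤ #T :=
    card_le_card_of_injOn f (fun u hu => (mem_filter.mp hu).2) hf.injOn
  have hcard : n ≤ #{u | f u ∉ T} := by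
    have := card_filter_add_card_filter_not (s := univ) (fun u => f u ∈ T)
    rw [card_univ] at this
    omega
  obtain ⟨S, hSsub, hScard⟩ := exists_subset_card_eq hcard
  have hnotIndep : ¬H.IsIndepSet S := fun hS => hH S ⟨hS, hScard⟩
  rw [isIndepSet_iff, Set.Pairwise] at hnotIndep
  push Not at hnotIndep
  obtain ⟨u, hu, v, hv, -, huv⟩ := hnotIndep
  exact ⟨u, v, huv, (mem_filter.mp (hSsub hu)).2, (mem_filter.mp (hSsub hv)).2⟩

variable [DecidableRel G.Adj]

theorem sum_degree_eq_sum_card_filter_adj [Fintype V] (T : Finset V) :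
    ∑ v ∈ T, G.degree v = ∑ w, #{v ∈ T | G.Adj v w} := by
  simpa only [bipartiteAbove, bipartiteBelow, ← neighborFinset_eq_filter,
    card_neighborFinset_eq_degree]
    using sum_card_bipartiteAbove_eq_sum_card_bipartiteBelow G.Adj (s := T) (t := univ)

theorem card_filter_adj_le_card_sub_one [DecidableEq V] {T : Finset V} {w : V} (hw : w ∈ T) :
    #{v ∈ T | G.Adj v w} ≤ #T - 1 := by
  rw [← card_erase_of_mem hw]
  exact card_le_card fun v hv => by
    rw [mem_filter] at hv
    exact mem_erase.mpr ⟨hv.2.ne, hv.1⟩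

theorem card_filter_adj_le_degree [Fintype V] (T : Finset V) (w : V) :
    #{v ∈ T | G.Adj v w} ≤ G.degree w := by
  rw [← card_neighborFinset_eq_degree]
  exact card_le_card fun v hv => by
    rw [mem_filter] at hv
    exact (G.mem_neighborFinset w v).mpr hv.2.symm

theorem card_filter_adj_lt_degree [Fintype V] [DecidableEq V] {T : Finset V} {w w' : V}
    (hadj : G.Adj w w') (hw' : w' ∉ T) : #{v ∈ T | G.Adj v w} < G.degree w := by
  have hw'mem : w' ∈ G.neighborFinset w := (G.mem_neighborFinset w w').mpr hadj
  calc #{v ∈ T | G.Adj v w} ≤ #((G.neighborFinset w).erase w') := card_le_card fun v hv => by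
        rw [mem_filter] at hv
        exact mem_erase.mpr ⟨fun h => hw' (h ▸ hv.1), (G.mem_neighborFinset w v).mpr hv.2.symm⟩
    _ < G.degree w := card_erase_lt_of_mem hw'mem

theorem sum_degree_add_two_le [Fintype V] [DecidableEq V] {T : Finset V} {w₁ w₂ : V}
    (hadj : G.Adj w₁ w₂) (h₁ : w₁ ∉ T) (h₂ : w₂ ∉ T) :
    ∑ v ∈ T, G.degree v + 2 ≤ #T * (#T - 1) + ∑ w ∈ Tᶜ, G.degree w := by
  have hpair : {w₁, w₂} ⊆ Tᶜ := by simp [insert_subset_iff, h₁, h₂]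
  have hne : w₁ ≠ w₂ := hadj.ne
  have hinside : ∑ w ∈ T, #{v ∈ T | G.Adj v w} ≤ #T * (#T - 1) :=
    sum_le_card_nsmul _ _ _ fun w hw => G.card_filter_adj_le_card_sub_one hw
  have hrest : ∑ w ∈ Tᶜ \ {w₁, w₂}, #{v ∈ T | G.Adj v w} ≤ ∑ w ∈ Tᶜ \ {w₁, w₂}, G.degree w :=
    sum_le_sum fun w _ => G.card_filter_adj_le_degree T w
  have hw₁ := G.card_filter_adj_lt_degree hadj h₂
  have hw₂ := G.card_filter_adj_lt_degree hadj.symm h₁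
  have hsplit := sum_sdiff hpair (f := fun w => #{v ∈ T | G.Adj v w})
  have hsplit_degree := sum_sdiff hpair (f := fun w => G.degree w)
  rw [sum_pair hne] at hsplit hsplit_degree
  rw [G.sum_degree_eq_sum_card_filter_adj, ← sum_add_sum_compl T]
  omega

end SimpleGraph

theorem K6mC6_indepSetFree_three : K6mC6.IndepSetFree 3 := by
  rw [K6mC6, indepSetFree_compl, CliqueFree]
  decide

theorem K6mC6_necessary_condition_6_general
    (n k t d₁ d₂ d₃ : ℕ) (hkt : 3 + k + t ≤ n)
    (π : List ℕ)
    (hπ : π = [d₁, d₂, d₃] ++ List.replicate k 3 ++ List.replicate t 2 ++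
          List.replicate (n - 3 - k - t) 1)
    (hpot : PotentiallyGraphic K6mC6 π) :
    d₁ + d₂ + d₃ ≤ n + 2 * k + t + 1 := by
  classical
  subst hπ
  obtain ⟨G, hG, f, hf⟩ := hpot
  rw [isDegSeqOf_iff] at hG
  obtain ⟨T, hT, hTc⟩ := exists_map_val_eq_of_map_univ_val_eq_add (fun v => G.degree v)
    (a := ([d₁, d₂, d₃] : Multiset ℕ))
    (b := ((List.replicate k 3 ++ List.replicate t 2 ++ List.replicate (n - 3 - k - t) 1 :
      List ℕ) : Multiset ℕ))
    (hG.trans (by simp only [Multiset.coe_add, List.append_assoc]))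
  have hcard : #T = 3 := by simpa using congrArg Multiset.card hT
  have hsumT : ∑ v ∈ T, G.degree v = d₁ + d₂ + d₃ := by
    simpa [add_assoc] using congrArg Multiset.sum hT
  have hsumTc : ∑ w ∈ Tᶜ, G.degree w = 3 * k + 2 * t + (n - 3 - k - t) := by
    simpa [mul_comm, add_assoc] using congrArg Multiset.sum hTc
  obtain ⟨u, v, huv, hu, hv⟩ :=
    G.exists_adj_map_notMem K6mC6_indepSetFree_three f hf T (by simp [hcard])
  have hbound := G.sum_degree_add_two_le (f.map_adj huv) hu hv
  rw [hcard, hsumT, hsumTc] at hbound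
  omega

/-- Necessity of condition (6) in Theorem 3.2: if the graphic sequence
`(d₁, d₂, d₃, 3ᵏ, 2ᵗ, 1^{n−3−k−t})` is potentially `K₆ − C₆`-graphic, then
`d₁ + d₂ + d₃ ≤ n + 2k + t + 1`. -/
theorem K6mC6_necessary_condition_6
    (n k t d₁ d₂ d₃ : ℕ) (hn : 6 ≤ n) (hkt : 3 + k + t ≤ n)
    (h12 : d₂ ≤ d₁) (h23 : d₃ ≤ d₂) (h3 : 3 ≤ d₃)
    (π : List ℕ)
    (hπ : π = [d₁, d₂, d₃] ++ List.replicate k 3 ++ List.replicate t 2 ++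
          List.replicate (n - 3 - k - t) 1)
    (hgraphic : IsGraphic π) (hpot : PotentiallyGraphic K6mC6 π) :
    d₁ + d₂ + d₃ ≤ n + 2 * k + t + 1 :=
  K6mC6_necessary_condition_6_general n k t d₁ d₂ d₃ hkt π hπ hpot
end

section
/- Let n ≥ 6 and let π = (d_1, …, d_n) be a graphic sequence that is potentially K_{3,3}-graphic. Then for each i ∈ {1, 2}, if d_1 = n − i then d_{4−i} ≥ 4; that is, if d_1 = n−1 then d_3 ≥ 4, and if d_1 = n−2 then d_2 ≥ 4. -/
/-! A vertex `u` of degree `n - i` has at most `i - 1` non-neighbours. In a realization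
containing `K_{3,3}`, `u` misses one side `B` of the copy, so every vertex of the other side
adjacent to `u` has degree at least `4` (its three neighbours in `B`, and `u`). Together with `u`
this gives at least `4 - i` vertices of degree at least `4`, i.e. `d_{4-i} ≥ 4`. -/

open Finset

lemma List.le_getD_of_lt_countP {c k : ℕ} {l : List ℕ} (hl : l.Pairwise (· ≥ ·))
    (hk : k < l.countP (c ≤ ·)) : c ≤ l.getD k 0 := by
  induction l generalizing k with
  | nil => simp at hk
  | cons x l ih =>
    rw [List.pairwise_cons] at hl
    cases k with
    | zero =>
      obtain ⟨y, hy, hcy⟩ := List.countP_pos_iff.mp (by omega : 0 < (x :: l).countP (c ≤ ·))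
      rcases List.mem_cons.mp hy with rfl | hy
      · simpa using hcy
      · simpa using (of_decide_eq_true hcy).trans (hl.1 y hy)
    | succ k =>
      have : k < l.countP (c ≤ ·) := by
        rw [List.countP_cons] at hk
        split_ifs at hk <;> omega
      simpa using ih hl.2 this

section DegreeSequence

variable {V : Type} [Fintype V] {G : SimpleGraph V} [DecidableRel G.Adj] {π : List ℕ}

lemma IsDegSeqOf.map_degree_s15 (h : IsDegSeqOf G π) :
    univ.val.map (fun v => G.degree v) = (π : Multiset ℕ) := by
  have hdeg : (fun v => (G.neighborSet v).ncard) = fun v => G.degree v :=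
    funext fun v => Set.ncard_eq_toFinset_card' _
  rwa [IsDegSeqOf, hdeg] at h

lemma IsDegSeqOf.exists_degree_eq (h : IsDegSeqOf G π) {d : ℕ} (hd : d ∈ π) :
    ∃ v, G.degree v = d := by
  obtain ⟨v, -, hv⟩ := Multiset.mem_map.mp (h.map_degree_s15 ▸ Multiset.mem_coe.mpr hd)
  exact ⟨v, hv⟩

lemma IsDegSeqOf.countP_eq_card_filter (h : IsDegSeqOf G π) (p : ℕ → Prop) [DecidablePred p] :
    π.countP p = #{v | p (G.degree v)} := by
  rw [← Multiset.coe_countP, ← h.map_degree_s15, Multiset.countP_map]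
  rfl

end DegreeSequence

namespace SimpleGraph

variable {V : Type} [Fintype V] [DecidableEq V] {G : SimpleGraph V} [DecidableRel G.Adj]

lemma card_add_one_le_degree_of_adj {β : Type} [Fintype β] {b : β → V}
    (hb : Function.Injective b) {a u : V} (hab : ∀ k, G.Adj a (b k))
    (hu : u ∉ Set.range b) (hua : G.Adj u a) : Fintype.card β + 1 ≤ G.degree a := by
  have hsub : insert u (univ.image b) ⊆ G.neighborFinset a := by
    intro x hx
    rcases mem_insert.mp hx with rfl | hx
    · simpa using hua.symm
    · obtain ⟨k, -, rfl⟩ := mem_image.mp hx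
      simpa using hab k
  have hu' : u ∉ univ.image b := by simpa using hu
  simpa [card_insert_of_notMem hu', card_image_of_injective _ hb] using card_le_card hsub

lemma card_sub_degree_compl_le_card_filter {α β : Type} [Fintype α] [Fintype β]
    {a : α → V} {b : β → V} (ha : Function.Injective a) (hb : Function.Injective b)
    (hab : ∀ j k, G.Adj (a j) (b k)) {u : V} (hu : u ∉ Set.range b)
    (hdeg : Fintype.card β + 1 ≤ G.degree u) :
    Fintype.card α - Gᶜ.degree u ≤ #{v | Fintype.card β + 1 ≤ G.degree v} := by
  have hsub : insert u (univ.image a \ insert u (Gᶜ.neighborFinset u)) ⊆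
      ({v | Fintype.card β + 1 ≤ G.degree v} : Finset V) := by
    intro v hv
    rcases mem_insert.mp hv with rfl | hv
    · simpa using hdeg
    · obtain ⟨hva, hvu⟩ := mem_sdiff.mp hv
      obtain ⟨j, -, rfl⟩ := mem_image.mp hva
      have hadj : G.Adj u (a j) := by
        by_contra h
        exact hvu (by simp_all [compl_adj, eq_comm])
      simpa using card_add_one_le_degree_of_adj hb (hab j) hu hadj
  have hsdiff := le_card_sdiff (insert u (Gᶜ.neighborFinset u)) (univ.image a)
  have hins := card_insert_le u (Gᶜ.neighborFinset u)
  have hcard := card_le_card hsub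
  rw [card_insert_of_notMem (by simp)] at hcard
  rw [card_image_of_injective _ ha, card_univ] at hsdiff
  rw [card_neighborFinset_eq_degree] at hins
  omega

lemma card_sub_degree_compl_le_card_filter_of_completeBipartite {α : Type} [Fintype α]
    (f : completeBipartiteGraph α α →g G) (hf : Function.Injective f) {u : V}
    (hdeg : Fintype.card α + 1 ≤ G.degree u) :
    Fintype.card α - Gᶜ.degree u ≤ #{v | Fintype.card α + 1 ≤ G.degree v} := by
  have hadj : ∀ j k, G.Adj (f (.inl j)) (f (.inr k)) := fun j k => f.map_adj (by simp)
  by_cases hu : u ∈ Set.range (f ∘ .inr)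
  · obtain ⟨k, rfl⟩ := hu
    have hu' : f (.inr k) ∉ Set.range (f ∘ .inl) := by
      rintro ⟨j, hj⟩
      exact Sum.inl_ne_inr (hf hj)
    exact card_sub_degree_compl_le_card_filter (hf.comp Sum.inr_injective)
      (hf.comp Sum.inl_injective) (fun j k => (hadj k j).symm) hu' hdeg
  · exact card_sub_degree_compl_le_card_filter (hf.comp Sum.inl_injective)
      (hf.comp Sum.inr_injective) hadj hu hdeg

end SimpleGraph

theorem K33_necessary_condition_2_general
    (n : ℕ) (hn : 6 ≤ n) (π : List ℕ) (hlen : π.length = n)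
    (hsorted : π.Pairwise (· ≥ ·))
    (hpot : PotentiallyGraphic K33 π) :
    ∀ i : ℕ, (i = 1 ∨ i = 2) → π.getD 0 0 = n - i → 4 ≤ π.getD (3 - i) 0 := by
  classical
  intro i hi hd₁
  obtain ⟨G, hG, f, hf⟩ := hpot
  obtain ⟨u, hu⟩ : ∃ u, G.degree u = n - i := by
    refine hG.exists_degree_eq (hd₁ ▸ ?_)
    rw [List.getD_eq_getElem _ _ (by omega)]
    exact List.getElem_mem _
  have hcompl : Gᶜ.degree u ≤ i - 1 := by
    have := SimpleGraph.degree_compl G (v := u)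
    simp only [Fintype.card_fin, hlen, hu] at this
    omega
  have hcount :=
    SimpleGraph.card_sub_degree_compl_le_card_filter_of_completeBipartite f hf (u := u)
      (by simp only [Fintype.card_fin, hu]; omega)
  rw [← hG.countP_eq_card_filter] at hcount
  simp only [Fintype.card_fin, Nat.reduceAdd] at hcount
  exact List.le_getD_of_lt_countP hsorted (by omega)

/-- Necessity of condition (2) in Theorem 3.1: if a graphic sequence with `n ≥ 6` terms
is potentially `K_{3,3}`-graphic, then `d₁ = n−1` implies `d₃ ≥ 4` and `d₁ = n−2`
implies `d₂ ≥ 4`. Here `π.getD (i-1) 0` is the `i`-th term `dᵢ`. -/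
theorem K33_necessary_condition_2
    (n : ℕ) (hn : 6 ≤ n) (π : List ℕ) (hlen : π.length = n)
    (hsorted : π.Pairwise (· ≥ ·)) (hgraphic : IsGraphic π)
    (hpot : PotentiallyGraphic K33 π) :
    ∀ i : ℕ, (i = 1 ∨ i = 2) → π.getD 0 0 = n - i → 4 ≤ π.getD (3 - i) 0 :=
  K33_necessary_condition_2_general n hn π hlen hsorted hpot
end
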